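/- arXiv:2006.15523 — 2 statements merged into one kernel-verified Lean document; each statement's English description precedes it below -/
import Mathlib

section
/- Let G = (V₄ × ⟨b⟩) ⋉ (ℤ³), where V₄ = {1, d₁, d₂, d₃} is the Klein four-group, b has infinite order, and the action on generators a₁, a₂, a₃ of ℤ³ is: a_i^b = a_i⁻¹, a_i^{d_i} = a_i, a_i^{d_j} = a_i⁻¹ for i ≠ j. Then the subgroup K = ⟨a₁a₂a₃, b⟩ is isomorphic to the Klein bottle group ⟨a, b | a^b = a⁻¹⟩. -/
/-- The single relator `b⁻¹ * a * b * a` of the Klein bottle group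
`K = ⟨a, b ∣ b⁻¹ a b = a⁻¹⟩`, with generator `0 = a`, `1 = b`. -/
def KleinRels : Set (FreeGroup (Fin 2)) :=
  {(FreeGroup.of 1)⁻¹ * FreeGroup.of 0 * FreeGroup.of 1 * FreeGroup.of 0}

/-- The Klein bottle group. -/
abbrev KleinGroup := PresentedGroup KleinRels

def aK : KleinGroup := PresentedGroup.of 0
def bK : KleinGroup := PresentedGroup.of 1


/-! The group `G = (V₄ × ⟨b⟩) ⋉ ℤ³` with `a_i^b = a_i⁻¹`, `a_i^{d_i} = a_i`,
`a_i^{d_j} = a_i⁻¹` for `i ≠ j`, where `V₄ = ZMod 2 × ZMod 2`,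
`d₁ = (1,0)`, `d₂ = (0,1)`, `d₃ = (1,1)`. -/

abbrev V4 := Multiplicative (ZMod 2 × ZMod 2)

/-- The top group `V₄ × ⟨b⟩`. -/
abbrev TopG := V4 × Multiplicative ℤ

/-- The base group `ℤ³` (written multiplicatively). -/
abbrev Z3 := Fin 3 → Multiplicative ℤ

/-- Sign associated to an element of `ZMod 2`. -/
def sgn : ZMod 2 → ℤˣ := fun c => if c = 0 then 1 else -1

/-- Exponent (mod 2) with which `(v, bᵐ)` inverts the generator `aᵢ`:
`a₁` is inverted by `d₂, d₃`, `a₂` by `d₁, d₃`, `a₃` by `d₁, d₂`, and every `aᵢ` by `b`. -/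
def sv : ZMod 2 × ZMod 2 → Fin 3 → ZMod 2 := fun v => ![v.2, v.1, v.1 + v.2]

/-- The sign with which `p = (v, bᵐ)` acts on `aᵢ`. -/
def expo : TopG → Fin 3 → ℤˣ :=
  fun p i => sgn ((Multiplicative.toAdd p.2 : ℤ) : ZMod 2) * sgn (sv (Multiplicative.toAdd p.1) i)

/-- The automorphism of `ℤ³` raising the `i`-th coordinate to the power `e i`. -/
def act (e : Fin 3 → ℤˣ) : MulAut Z3 where
  toFun f := fun i => f i ^ ((e i : ℤˣ) : ℤ)
  invFun f := fun i => f i ^ ((e i : ℤˣ) : ℤ)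
  left_inv f := by
    funext i
    show (f i ^ ((e i : ℤˣ) : ℤ)) ^ ((e i : ℤˣ) : ℤ) = f i
    rw [← zpow_mul, ← Units.val_mul, Int.units_mul_self, Units.val_one, zpow_one]
  right_inv f := by
    funext i
    show (f i ^ ((e i : ℤˣ) : ℤ)) ^ ((e i : ℤˣ) : ℤ) = f i
    rw [← zpow_mul, ← Units.val_mul, Int.units_mul_self, Units.val_one, zpow_one]
  map_mul' f g := by
    funext i
    exact mul_zpow _ _ _

/-- The action of `V₄ × ⟨b⟩` on `ℤ³`. -/
def phi : TopG →* MulAut Z3 :=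
  MonoidHom.mk' (fun p => act (expo p)) (by
    intro p q
    ext f i
    show f i ^ ((expo (p * q) i : ℤˣ) : ℤ) = (f i ^ ((expo q i : ℤˣ) : ℤ)) ^ ((expo p i : ℤˣ) : ℤ)
    rw [← zpow_mul, ← Units.val_mul]
    congr 2
    simp only [expo, sv, Prod.fst_mul, Prod.snd_mul, toAdd_mul, Int.cast_add, Prod.mk_mul_mk]
    have hsgn : ∀ c d : ZMod 2, sgn (c + d) = sgn c * sgn d := by decide
    fin_cases i <;> simp [sv, Prod.fst_add, Prod.snd_add, hsgn] <;> ac_rfl)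

/-- The group `G = (V₄ × ⟨b⟩) ⋉ ℤ³`. -/
abbrev Gex := SemidirectProduct Z3 TopG phi

/-- The generator `aᵢ` of the base `ℤ³`. -/
def agen (i : Fin 3) : Gex := SemidirectProduct.inl (Pi.mulSingle i (Multiplicative.ofAdd (1:ℤ)))

/-- The element `a = a₁a₂a₃`. -/
def aG : Gex := agen 0 * agen 1 * agen 2

/-- The element `b`. -/
def bG : Gex := SemidirectProduct.inr ((1 : V4), Multiplicative.ofAdd (1:ℤ))

/-- The elements `d₁, d₂, d₃` (indexed by the nonzero elements of `V₄`). -/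
def dG (v : V4) : Gex := SemidirectProduct.inr (v, 1)


/-! If `b⁻¹ a b = a⁻¹`, then `b` normalizes `⟨a⟩`, so `⟨a, b⟩ = ⟨a⟩⟨b⟩` and every element of
`⟨a, b⟩` is some `aᵐ bⁿ`. In the Klein bottle group this normal form shows that the map to
`⟨a, b⟩` sending the generators to `a, b` is injective as soon as `aᵐ bⁿ = 1` forces
`m = n = 0`. In `G` this holds for `a = a₁a₂a₃` and `b`: the exponent `n` can be read off in the
`⟨b⟩` factor of the top group, and then `m` in the base `ℤ³`, where `a = (1, 1, 1)`. -/

open Subgroup SemidirectProduct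

section InvMulMulEqInv

variable {G : Type*} [Group G] {a b : G}

theorem mem_normalizer_zpowers_of_inv_mul_mul_eq_inv (h : b⁻¹ * a * b = a⁻¹) :
    b ∈ normalizer (zpowers a) := by
  rw [← inv_mem_iff, mem_normalizer_iff_map_conj_eq, MonoidHom.map_zpowers]
  simp [h, zpowers_inv]

theorem mem_closure_pair_iff_of_inv_mul_mul_eq_inv (h : b⁻¹ * a * b = a⁻¹) {x : G} :
    x ∈ closure {a, b} ↔ ∃ m n : ℤ, a ^ m * b ^ n = x := by
  have hle : zpowers b ≤ normalizer (zpowers a) :=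
    zpowers_le.2 (mem_normalizer_zpowers_of_inv_mul_mul_eq_inv h)
  rw [Set.insert_eq, Subgroup.closure_union, ← zpowers_eq_closure, ← zpowers_eq_closure,
    ← SetLike.mem_coe, coe_mul_of_right_le_normalizer_left _ _ hle]
  simp [Set.mem_mul, mem_zpowers_iff]

end InvMulMulEqInv

namespace KleinGroup

theorem bK_inv_mul_aK_mul_bK : bK⁻¹ * aK * bK = aK⁻¹ :=
  eq_inv_of_mul_eq_one_left (PresentedGroup.one_of_mem rfl)

theorem closure_aK_bK : closure {aK, bK} = ⊤ := by
  rw [← PresentedGroup.closure_range_of KleinRels]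
  congr 1
  ext x
  simp [Fin.exists_fin_two, aK, bK, eq_comm]

variable {G : Type*} [Group G] {a b : G}

def lift (h : b⁻¹ * a * b = a⁻¹) : KleinGroup →* G :=
  PresentedGroup.toGroup (f := ![a, b]) (by
    rintro r rfl
    simpa [mul_eq_one_iff_eq_inv] using h)

@[simp]
theorem lift_aK (h : b⁻¹ * a * b = a⁻¹) : lift h aK = a :=
  PresentedGroup.toGroup.of _

@[simp]
theorem lift_bK (h : b⁻¹ * a * b = a⁻¹) : lift h bK = b :=
  PresentedGroup.toGroup.of _

theorem range_lift (h : b⁻¹ * a * b = a⁻¹) : (lift h).range = closure {a, b} := by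
  rw [MonoidHom.range_eq_map, ← closure_aK_bK, MonoidHom.map_closure, Set.image_pair,
    lift_aK, lift_bK]

theorem lift_injective (h : b⁻¹ * a * b = a⁻¹)
    (hfree : ∀ m n : ℤ, a ^ m * b ^ n = 1 → m = 0 ∧ n = 0) :
    Function.Injective (lift h) := by
  refine (injective_iff_map_eq_one _).2 fun x hx => ?_
  obtain ⟨m, n, rfl⟩ :=
    (mem_closure_pair_iff_of_inv_mul_mul_eq_inv bK_inv_mul_aK_mul_bK).1 (closure_aK_bK ▸ mem_top x)
  obtain ⟨rfl, rfl⟩ := hfree m n (by simpa using hx)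
  simp

theorem nonempty_closure_pair_mulEquiv (h : b⁻¹ * a * b = a⁻¹)
    (hfree : ∀ m n : ℤ, a ^ m * b ^ n = 1 → m = 0 ∧ n = 0) :
    Nonempty (closure {a, b} ≃* KleinGroup) :=
  ⟨((MonoidHom.ofInjective (lift_injective h hfree)).trans
    (MulEquiv.subgroupCongr (range_lift h))).symm⟩

end KleinGroup

theorem aG_eq_inl : aG = inl fun _ => Multiplicative.ofAdd 1 := by
  rw [aG, agen, agen, agen, ← map_mul, ← map_mul]
  congr 1
  funext i
  fin_cases i <;> rfl

theorem bG_inv_mul_aG_mul_bG : bG⁻¹ * aG * bG = aG⁻¹ := by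
  have hexpo : ∀ i, expo ((1 : V4), Multiplicative.ofAdd (1 : ℤ)) i = -1 := by decide
  rw [aG_eq_inl, bG, ← map_inv inr, ← inl_aut_inv, ← map_inv inl]
  congr 1
  funext i
  show Multiplicative.ofAdd (1 : ℤ) ^ ((expo ((1 : V4), Multiplicative.ofAdd (1 : ℤ)) i : ℤˣ) : ℤ)
    = (Multiplicative.ofAdd 1)⁻¹
  rw [hexpo, Units.val_neg, Units.val_one, zpow_neg_one]

theorem eq_zero_of_aG_zpow_mul_bG_zpow_eq_one {m n : ℤ} (h : aG ^ m * bG ^ n = 1) :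
    m = 0 ∧ n = 0 := by
  rw [aG_eq_inl, bG, ← map_zpow inl, ← map_zpow inr] at h
  obtain ⟨hm, hn⟩ := SemidirectProduct.ext_iff.1 ((mk_eq_inl_mul_inr _ _).trans h)
  exact ⟨by simpa using congrFun hm 0, by simpa using hn⟩

/-- The subgroup `K = ⟨a₁a₂a₃, b⟩` of `G = (V₄ × ⟨b⟩) ⋉ ℤ³` is isomorphic to the
Klein bottle group `⟨a, b ∣ aᵇ = a⁻¹⟩`. -/
theorem subgroup_iso_klein :
    Nonempty ((Subgroup.closure {aG, bG} : Subgroup Gex) ≃* KleinGroup) :=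
  KleinGroup.nonempty_closure_pair_mulEquiv bG_inv_mul_aG_mul_bG fun _ _ =>
    eq_zero_of_aG_zpow_mul_bG_zpow_eq_one
end

section
/- If H is a verbally closed subgroup of G and V is a verbal subgroup functor, then the image of H in G/V(G) under the natural projection is isomorphic to H/V(H) and is verbally closed in G/V(G). -/
/-- `H` is verbally closed in `G`: every equation `w(x₁,x₂,…) = h` with `h ∈ H`,
`w` a word in the free group, that has a solution in `G` has a solution in `H`. -/
def VerballyClosed {G : Type*} [Group G] (H : Subgroup G) : Prop :=
  ∀ (w : FreeGroup ℕ) (h : G), h ∈ H → (∃ g : ℕ → G, FreeGroup.lift g w = h) →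
    ∃ k : ℕ → G, (∀ n, k n ∈ H) ∧ FreeGroup.lift k w = h

/-- The verbal subgroup of `G` corresponding to a set of words `W`: the subgroup
generated by all values of the words of `W` in `G`. -/
def verbalSubgroup (W : Set (FreeGroup ℕ)) (G : Type*) [Group G] : Subgroup G :=
  Subgroup.closure {x : G | ∃ w ∈ W, ∃ g : ℕ → G, FreeGroup.lift g w = x}

/-- Verbal subgroups are normal. -/
instance verbal_normal (W : Set (FreeGroup ℕ)) (G : Type*) [Group G] :
    (verbalSubgroup W G).Normal := by
  constructor
  intro x hx c
  refine Subgroup.closure_induction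
    (fun y hy => ?_) (by simpa using Subgroup.one_mem _) (fun y z _ _ hy hz => ?_) (fun y _ hy => ?_) hx
  · obtain ⟨w, hw, g, rfl⟩ := hy
    refine Subgroup.subset_closure ⟨w, hw, fun n => c * g n * c⁻¹, ?_⟩
    have := FreeGroup.lift_unique (f := fun n => c * g n * c⁻¹)
      (((MulAut.conj c).toMonoidHom).comp (FreeGroup.lift g))
      (by intro n; simp [MulAut.conj]) (x := w)
    simpa [MulAut.conj] using this.symm
  · have : c * (y * z) * c⁻¹ = (c * y * c⁻¹) * (c * z * c⁻¹) := by group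
    rw [this]; exact Subgroup.mul_mem _ hy hz
  · have : c * y⁻¹ * c⁻¹ = (c * y * c⁻¹)⁻¹ := by group
    rw [this]; exact Subgroup.inv_mem _ hy

/-!
Every element of `V(G)` is the value `u(g)` of a single word `u ∈ V(F)`, `F` the free group
(products are handled by renaming the variables of the factors apart). For verbally closed `H`
this gives `H ∩ V(G) = V(H)`, so `H → G/V(G)` has kernel `V(H)`. If `w(ḡ) = h̄` in `G/V(G)`,
lift `ḡ` to `g`; then `h = w(g) u(g')` with `u ∈ V(F)`, and a solution of `w(x) u(y) = h` in `H`
projects to a solution of `w(x) = h̄` in the image of `H`, since `u(y)` dies modulo `V(G)`.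
-/

namespace FreeGroup

variable {α β G K : Type*} [Group G] [Group K]

theorem apply_lift (f : G →* K) (g : α → G) (w : FreeGroup α) :
    f (lift g w) = lift (f ∘ g) w :=
  lift_unique (f.comp (lift g)) (by simp)

theorem lift_map (e : α → β) (g : β → G) (w : FreeGroup α) :
    lift g (map e w) = lift (g ∘ e) w :=
  lift_unique ((lift g).comp (map e)) (by simp)

end FreeGroup

theorem exists_joint_assignment {G : Type*} (g₁ g₂ : ℕ → G) :
    ∃ e₁ e₂ : ℕ → ℕ, ∃ g : ℕ → G, g ∘ e₁ = g₁ ∧ g ∘ e₂ = g₂ :=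
  ⟨Equiv.natSumNatEquivNat ∘ Sum.inl, Equiv.natSumNatEquivNat ∘ Sum.inr,
    Sum.elim g₁ g₂ ∘ Equiv.natSumNatEquivNat.symm, by ext; simp, by ext; simp⟩

noncomputable def Subgroup.mapMkEquivQuotientSubgroupOf {G : Type*} [Group G] (N : Subgroup G)
    [N.Normal] (H : Subgroup G) : H.map (QuotientGroup.mk' N) ≃* H ⧸ N.subgroupOf H :=
  have range_eq : ((QuotientGroup.mk' N).comp H.subtype).range = H.map (QuotientGroup.mk' N) := by
    rw [MonoidHom.range_comp, Subgroup.range_subtype]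
  have ker_eq : ((QuotientGroup.mk' N).comp H.subtype).ker = N.subgroupOf H := by
    rw [← MonoidHom.comap_ker, QuotientGroup.ker_mk']
    rfl
  ((MulEquiv.subgroupCongr range_eq).symm.trans
    (QuotientGroup.quotientKerEquivRange _).symm).trans
    (QuotientGroup.quotientMulEquivOfEq ker_eq)

section Verbal

variable (W : Set (FreeGroup ℕ)) {G K : Type*} [Group G] [Group K]

theorem verbalSubgroup_map_le (f : G →* K) :
    (verbalSubgroup W G).map f ≤ verbalSubgroup W K := by
  rw [verbalSubgroup, MonoidHom.map_closure]
  apply Subgroup.closure_mono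
  rintro _ ⟨_, ⟨w, hw, g, rfl⟩, rfl⟩
  exact ⟨w, hw, f ∘ g, (FreeGroup.apply_lift f g w).symm⟩

theorem lift_mem_verbalSubgroup {u : FreeGroup ℕ} (hu : u ∈ verbalSubgroup W (FreeGroup ℕ))
    (g : ℕ → G) : FreeGroup.lift g u ∈ verbalSubgroup W G :=
  verbalSubgroup_map_le W (FreeGroup.lift g) ⟨u, hu, rfl⟩

theorem mem_verbalSubgroup_iff {v : G} :
    v ∈ verbalSubgroup W G ↔
      ∃ u ∈ verbalSubgroup W (FreeGroup ℕ), ∃ g : ℕ → G, FreeGroup.lift g u = v := by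
  refine ⟨fun hv => ?_, fun ⟨u, hu, g, hg⟩ => hg ▸ lift_mem_verbalSubgroup W hu g⟩
  induction hv using Subgroup.closure_induction with
  | mem _ hx =>
    obtain ⟨w, hw, g, rfl⟩ := hx
    exact ⟨w, Subgroup.subset_closure ⟨w, hw, FreeGroup.of, FreeGroup.lift_of_apply w⟩, g, rfl⟩
  | one => exact ⟨1, one_mem _, 1, map_one _⟩
  | mul _ _ _ _ ih₁ ih₂ =>
    obtain ⟨u₁, hu₁, g₁, rfl⟩ := ih₁
    obtain ⟨u₂, hu₂, g₂, rfl⟩ := ih₂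
    obtain ⟨e₁, e₂, g, rfl, rfl⟩ := exists_joint_assignment g₁ g₂
    refine ⟨FreeGroup.map e₁ u₁ * FreeGroup.map e₂ u₂, mul_mem ?_ ?_, g, ?_⟩
    · exact verbalSubgroup_map_le W (FreeGroup.map e₁) ⟨u₁, hu₁, rfl⟩
    · exact verbalSubgroup_map_le W (FreeGroup.map e₂) ⟨u₂, hu₂, rfl⟩
    · rw [map_mul, FreeGroup.lift_map, FreeGroup.lift_map]
  | inv _ _ ih =>
    obtain ⟨u, hu, g, rfl⟩ := ih
    exact ⟨u⁻¹, inv_mem hu, g, map_inv _ _⟩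

variable {W} {H : Subgroup G}

theorem VerballyClosed.verbalSubgroup_subgroupOf (hH : VerballyClosed H) :
    (verbalSubgroup W G).subgroupOf H = verbalSubgroup W H := by
  refine le_antisymm (fun x hx => ?_)
    (Subgroup.map_le_iff_le_comap.1 (verbalSubgroup_map_le W H.subtype))
  obtain ⟨u, hu, g, hg⟩ := (mem_verbalSubgroup_iff W).1 (Subgroup.mem_subgroupOf.1 hx)
  obtain ⟨k, hkH, hk⟩ := hH u x x.2 ⟨g, hg⟩
  have lift_eq : FreeGroup.lift (fun n => (⟨k n, hkH n⟩ : H)) u = x :=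
    Subtype.ext (by rw [← H.coe_subtype, FreeGroup.apply_lift]; exact hk)
  exact lift_eq ▸ lift_mem_verbalSubgroup W hu _

theorem VerballyClosed.map_mk'_verbalSubgroup (hH : VerballyClosed H) :
    VerballyClosed (H.map (QuotientGroup.mk' (verbalSubgroup W G))) := by
  set π := QuotientGroup.mk' (verbalSubgroup W G)
  rintro w _ ⟨h, hh, rfl⟩ ⟨q, hq⟩
  obtain ⟨g, rfl⟩ := (QuotientGroup.mk'_surjective (verbalSubgroup W G)).comp_left q
  have defect_mem : (FreeGroup.lift g w)⁻¹ * h ∈ verbalSubgroup W G := by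
    rwa [← FreeGroup.apply_lift, QuotientGroup.mk'_apply, QuotientGroup.mk'_apply,
      QuotientGroup.eq] at hq
  obtain ⟨u, hu, g', hg'⟩ := (mem_verbalSubgroup_iff W).1 defect_mem
  obtain ⟨e₁, e₂, g'', rfl, rfl⟩ := exists_joint_assignment g g'
  obtain ⟨k, hkH, hk⟩ := hH (FreeGroup.map e₁ w * FreeGroup.map e₂ u) h hh
    ⟨g'', by rw [map_mul, FreeGroup.lift_map, FreeGroup.lift_map, hg', mul_inv_cancel_left]⟩
  refine ⟨π ∘ k ∘ e₁, fun n => ⟨k (e₁ n), hkH _, rfl⟩, ?_⟩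
  have u_trivial : π (FreeGroup.lift (k ∘ e₂) u) = 1 :=
    (QuotientGroup.eq_one_iff _).2 (lift_mem_verbalSubgroup W hu _)
  rw [← hk, map_mul, FreeGroup.lift_map, FreeGroup.lift_map, map_mul, u_trivial, mul_one,
    FreeGroup.apply_lift]

end Verbal

/-- If `H` is verbally closed in `G`, then the image of `H` in `G/V(G)` is
isomorphic to `H/V(H)` and is verbally closed in `G/V(G)`. -/
theorem image_in_quotient_verballyClosed {G : Type*} [Group G] (H : Subgroup G)
    (hvc : VerballyClosed H) (W : Set (FreeGroup ℕ)) :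
    Nonempty ((H.map (QuotientGroup.mk' (verbalSubgroup W G)) : Subgroup (G ⧸ verbalSubgroup W G))
        ≃* (↥H ⧸ verbalSubgroup W ↥H)) ∧
      VerballyClosed (H.map (QuotientGroup.mk' (verbalSubgroup W G))) :=
  ⟨⟨(Subgroup.mapMkEquivQuotientSubgroupOf _ H).trans
      (QuotientGroup.quotientMulEquivOfEq hvc.verbalSubgroup_subgroupOf)⟩,
    hvc.map_mk'_verbalSubgroup⟩
end
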